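/- Let d ≥ 2 and g ∈ SL(d, ℝ) with a singular value decomposition g = k_g D_g k_g' (k_g, k_g' orthogonal, D_g diagonal with decreasing positive entries), and for each n ≥ 1 fix a singular value decomposition gⁿ = kₙ Dₙ kₙ'. Assume σ₁(gⁿ)/σ₂(gⁿ) → ∞ as n → ∞. Then ℓ₁(g)/σ₁(g) ≤ σ₂(g)/σ₁(g) + limsup_{n→∞} √(1 − ⟨k_g' kₙ e₁, e_d⟩²), where ℓ₁(g) is the largest modulus of a complex eigenvalue of g. -/

import Mathlib

/-!
Every complex eigenvalue of `gⁿ` is bounded by the operator norm of the complexification of `gⁿ`,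
and a real singular value decomposition is also a complex one, so `ℓ₁(g)ⁿ ≤ σ₁(gⁿ)`.

On the other hand `σ₁(gⁿ⁺¹) = ‖D_g u Dₙ‖` with `u = k_g' kₙ` orthogonal. Splitting `Dₙ` into its
top entry `σ₁(gⁿ)` and the rest, of norm `σ₂(gⁿ)`, and `D_g (u e₁)` into its last coordinate,
which carries the smallest singular value `σ_d(g) ≤ σ₂(g)`, and the rest gives
`σ₁(gⁿ⁺¹) ≤ σ₁(gⁿ) (σ₂(g) + σ₁(g) √(1 - ⟨u e₁, e_d⟩²)) + σ₁(g) σ₂(gⁿ)`.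
As `σ₂(gⁿ)/σ₁(gⁿ) → 0`, for every `q > σ₂(g) + σ₁(g) limsup √(1 - ⟨u e₁, e_d⟩²)` the sequence
`σ₁(gⁿ)` eventually grows by a factor at most `q` per step, and `ℓ₁(g)ⁿ ≤ σ₁(gⁿ)` forces
`ℓ₁(g) ≤ q`.
-/

open Matrix Filter

/-- The list of singular values of a real square matrix, in decreasing order
(the square roots of the eigenvalues of `Aᴴ * A`). -/
noncomputable def svalList {n : Type*} [Fintype n] [DecidableEq n]
    (A : Matrix n n ℝ) : List ℝ :=
  (Multiset.sort
    (Finset.univ.val.map fun i =>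
      Real.sqrt ((show (Aᵀ * A).IsHermitian by
        simpa using Matrix.isHermitian_conjTranspose_mul_self A).eigenvalues i)) (· ≤ ·)).reverse

/-- `sval j A` is the `j`-th largest singular value `σⱼ(A)` of `A` (1-indexed). -/
noncomputable def sval {n : Type*} [Fintype n] [DecidableEq n]
    (j : ℕ) (A : Matrix n n ℝ) : ℝ :=
  (svalList A).getD (j - 1) 0

/-- The list of moduli of the complex eigenvalues (roots of the characteristic polynomial,
with multiplicity) of a real square matrix, in decreasing order. -/
noncomputable def lvalList {n : Type*} [Fintype n] [DecidableEq n]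
    (A : Matrix n n ℝ) : List ℝ :=
  (Multiset.sort
    (((A.charpoly.map (algebraMap ℝ ℂ)).roots).map fun z => ‖z‖) (· ≤ ·)).reverse

/-- `lval j A` is the `j`-th largest modulus `ℓⱼ(A)` of a complex eigenvalue of `A`
(1-indexed). -/
noncomputable def lval {n : Type*} [Fintype n] [DecidableEq n]
    (j : ℕ) (A : Matrix n n ℝ) : ℝ :=
  (lvalList A).getD (j - 1) 0

open scoped Matrix.Norms.L2Operator Topology

section L2OpNorm

variable {𝕜 : Type*} [RCLike 𝕜] {n : Type*} [Fintype n] [DecidableEq n]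

theorem l2_opNorm_mul_single_le (M : Matrix n n 𝕜) (j : n) (c : 𝕜) :
    ‖M * single j j c‖ ≤ ‖c‖ * ‖WithLp.toLp 2 (M.col j)‖ := by
  rw [cstar_norm_def]
  refine ContinuousLinearMap.opNorm_le_bound _ (by positivity) fun x => ?_
  have hx : toEuclideanCLM (𝕜 := 𝕜) (M * single j j c) x
      = (c * x j) • WithLp.toLp 2 (M.col j) := by
    ext i
    simp [single_mulVec_eq, mulVec_smul]
  rw [hx, norm_smul, norm_mul, mul_right_comm]
  gcongr
  exact PiLp.norm_apply_le x j

theorem l2_opNorm_mul_diagonal_le (M : Matrix n n 𝕜) (b : n → 𝕜) (j : n) :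
    ‖M * diagonal b‖ ≤
      ‖b j‖ * ‖WithLp.toLp 2 (M.col j)‖ + ‖M‖ * ‖Function.update b j 0‖ := by
  have hb : diagonal b = single j j (b j) + diagonal (Function.update b j 0) := by
    rw [← diagonal_single, diagonal_add]
    congr 1
    ext i
    by_cases h : i = j <;> simp [h]
  rw [hb, mul_add]
  refine (norm_add_le _ _).trans (add_le_add (l2_opNorm_mul_single_le M j (b j)) ?_)
  rw [← l2_opNorm_diagonal]
  exact l2_opNorm_mul M _

theorem l2_opNorm_mul_diagonal_mul {K K' : Matrix n n 𝕜} (hK : K ∈ unitaryGroup n 𝕜)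
    (hK' : K' ∈ unitaryGroup n 𝕜) (D : n → 𝕜) : ‖K * diagonal D * K'‖ = ‖D‖ := by
  rw [CStarRing.norm_mul_mem_unitary _ hK', CStarRing.norm_mem_unitary_mul _ hK,
    l2_opNorm_diagonal]

end L2OpNorm

section Real

variable {n : Type*} [Fintype n] [DecidableEq n]

theorem mem_unitaryGroup_of_mul_transpose_eq_one {K : Matrix n n ℝ} (h : K * Kᵀ = 1) :
    K ∈ unitaryGroup n ℝ := by
  rwa [mem_unitaryGroup_iff, star_eq_conjTranspose, conjTranspose_eq_transpose_of_trivial]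

theorem map_ofReal_mem_unitaryGroup {K : Matrix n n ℝ} (h : K ∈ unitaryGroup n ℝ) :
    K.map (algebraMap ℝ ℂ) ∈ unitaryGroup n ℂ := by
  rw [mem_unitaryGroup_iff, star_eq_conjTranspose, ← conjTranspose_map _ (by intro x; simp),
    ← Matrix.map_mul, ← star_eq_conjTranspose, Unitary.mul_star_self_of_mem h]
  simp

theorem pi_norm_eq_of_forall_abs_le {ι : Type*} [Fintype ι] {D : ι → ℝ} {i : ι}
    (h : ∀ j, |D j| ≤ D i) : ‖D‖ = D i :=
  le_antisymm ((pi_norm_le_iff_of_nonneg ((abs_nonneg _).trans (h i))).2 h)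
    ((le_abs_self _).trans (norm_le_pi_norm D i))

theorem norm_diagonal_mulVec_le (a y : n → ℝ) (k : n) :
    ‖WithLp.toLp 2 (diagonal a *ᵥ y)‖ ≤ |a k * y k| + ‖a‖ * √(y ⬝ᵥ y - y k ^ 2) := by
  have hrest : y ⬝ᵥ y - y k ^ 2 = ∑ i ∈ Finset.univ.erase k, y i ^ 2 := by
    rw [dotProduct, ← Finset.add_sum_erase _ _ (Finset.mem_univ k)]
    simp [sq]
  have hsq : ‖WithLp.toLp 2 (diagonal a *ᵥ y)‖ ^ 2
      ≤ (a k * y k) ^ 2 + (‖a‖ * √(y ⬝ᵥ y - y k ^ 2)) ^ 2 := by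
    rw [hrest, mul_pow ‖a‖, Real.sq_sqrt (Finset.sum_nonneg fun i _ => sq_nonneg (y i)),
      EuclideanSpace.real_norm_sq_eq, ← Finset.add_sum_erase _ _ (Finset.mem_univ k),
      Finset.mul_sum]
    simp only [mulVec_diagonal, mul_pow]
    refine add_le_add le_rfl (Finset.sum_le_sum fun i _ => ?_)
    have hai := abs_le.1 (norm_le_pi_norm a i)
    exact mul_le_mul_of_nonneg_right (sq_le_sq' hai.1 hai.2) (sq_nonneg _)
  refine le_of_pow_le_pow_left₀ two_ne_zero (by positivity) (hsq.trans ?_)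
  rw [← sq_abs (a k * y k)]
  nlinarith [abs_nonneg (a k * y k),
    mul_nonneg (norm_nonneg a) (Real.sqrt_nonneg (y ⬝ᵥ y - y k ^ 2))]

theorem norm_le_pi_norm_of_mem_spectrum_map [Nonempty n] {K K' : Matrix n n ℝ}
    (hK : K ∈ unitaryGroup n ℝ) (hK' : K' ∈ unitaryGroup n ℝ) (D : n → ℝ) {z : ℂ}
    (hz : z ∈ spectrum ℂ ((K * diagonal D * K').map (algebraMap ℝ ℂ))) : ‖z‖ ≤ ‖D‖ := by
  have hmap : (K * diagonal D * K').map (algebraMap ℝ ℂ)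
      = K.map (algebraMap ℝ ℂ) * diagonal (fun i => (D i : ℂ)) * K'.map (algebraMap ℝ ℂ) := by
    rw [Matrix.map_mul, Matrix.map_mul, diagonal_map (map_zero _)]
    rfl
  calc ‖z‖ ≤ ‖(K * diagonal D * K').map (algebraMap ℝ ℂ)‖ := spectrum.norm_le_norm_of_mem hz
    _ = ‖D‖ := by
      rw [hmap, l2_opNorm_mul_diagonal_mul (map_ofReal_mem_unitaryGroup hK)
        (map_ofReal_mem_unitaryGroup hK')]
      simp [Pi.norm_def]

theorem exists_mem_roots_norm_eq_lval_one [Nonempty n] (A : Matrix n n ℝ) :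
    ∃ z ∈ (A.charpoly.map (algebraMap ℝ ℂ)).roots, ‖z‖ = lval 1 A := by
  have hne : lvalList A ≠ [] := by
    rw [← List.length_pos_iff, lvalList, List.length_reverse, Multiset.length_sort,
      Multiset.card_map, IsAlgClosed.card_roots_map_eq_natDegree_of_injective _
      (algebraMap ℝ ℂ).injective, charpoly_natDegree_eq_dim]
    exact Fintype.card_pos
  have hmem : lval 1 A ∈ lvalList A := by
    rw [lval, List.getD_eq_getElem _ _ (List.length_pos_iff.2 hne)]
    exact List.getElem_mem _
  rw [lvalList, List.mem_reverse, Multiset.mem_sort, Multiset.mem_map] at hmem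
  exact hmem

theorem mem_spectrum_map_of_mem_roots {A : Matrix n n ℝ} {z : ℂ}
    (hz : z ∈ (A.charpoly.map (algebraMap ℝ ℂ)).roots) :
    z ∈ spectrum ℂ (A.map (algebraMap ℝ ℂ)) := by
  rw [mem_spectrum_iff_isRoot_charpoly, charpoly_map]
  exact (Polynomial.mem_roots'.1 hz).2

end Real

theorem le_of_pow_le_of_forall_lt_succ_le {a : ℕ → ℝ} {ℓ R : ℝ}
    (hpos : ∀ᶠ n in atTop, 0 < a n) (hpow : ∀ᶠ n in atTop, ℓ ^ n ≤ a n)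
    (hstep : ∀ q, R < q → ∀ᶠ n in atTop, a (n + 1) ≤ q * a n) : ℓ ≤ R := by
  by_contra! hR
  obtain ⟨q, hRq, hqℓ⟩ := exists_between hR
  obtain ⟨N, hN⟩ := eventually_atTop.1 ((hpos.and hpow).and (hstep q hRq))
  have hq : 0 < q :=
    pos_of_mul_pos_left ((hN (N + 1) (by omega)).1.1.trans_le (hN N le_rfl).2) (hN N le_rfl).1.1.le
  have hgeo : ∀ m, a (N + m) ≤ q ^ m * a N := by
    intro m
    induction m with
    | zero => simp
    | succ m ih =>
      calc a (N + (m + 1)) ≤ q * a (N + m) := (hN (N + m) (by omega)).2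
        _ ≤ q * (q ^ m * a N) := by gcongr
        _ = q ^ (m + 1) * a N := by ring
  have hℓ : 0 < ℓ := hq.trans hqℓ
  have hbound : ∀ m, ℓ ^ N * (ℓ / q) ^ m ≤ a N := by
    intro m
    have h := (hN (N + m) (by omega)).1.2.trans (hgeo m)
    rw [div_pow, mul_div_assoc', div_le_iff₀ (by positivity), ← pow_add, mul_comm]
    exact h
  have htend : Tendsto (fun m => ℓ ^ N * (ℓ / q) ^ m) atTop atTop :=
    (tendsto_pow_atTop_atTop_of_one_lt ((one_lt_div hq).2 hqℓ)).const_mul_atTop (by positivity)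
  obtain ⟨m, hm⟩ := (htend.eventually_gt_atTop (a N)).exists
  exact (hbound m).not_gt hm

theorem le_of_pow_le_of_succ_le_mul_add {a b s : ℕ → ℝ} {ℓ c C : ℝ} (hC : 0 < C)
    (hpos : ∀ᶠ n in atTop, 0 < a n) (hpow : ∀ᶠ n in atTop, ℓ ^ n ≤ a n)
    (hstep : ∀ᶠ n in atTop, a (n + 1) ≤ a n * (c + C * s n) + C * b n)
    (hs : IsBoundedUnder (· ≤ ·) atTop s) (hba : Tendsto (fun n => b n / a n) atTop (𝓝 0)) :
    ℓ ≤ c + C * limsup s atTop := by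
  refine le_of_pow_le_of_forall_lt_succ_le hpos hpow fun q hq => ?_
  obtain ⟨q', hq', hq'q⟩ := exists_between hq
  have hs' : ∀ᶠ n in atTop, c + C * s n < q' := by
    have hlim : limsup s atTop < (q' - c) / C := by rw [lt_div_iff₀ hC]; linarith
    filter_upwards [eventually_lt_of_limsup_lt hlim hs] with n hn
    rw [lt_div_iff₀ hC] at hn
    linarith
  have hba' : ∀ᶠ n in atTop, C * (b n / a n) < q - q' :=
    (hba.const_mul C).eventually_lt_const (by rw [mul_zero]; linarith)
  filter_upwards [hpos, hstep, hs', hba'] with n hpos hstep hs' hba'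
  calc a (n + 1) ≤ a n * (c + C * s n) + a n * (C * (b n / a n)) := by
        rwa [mul_div_assoc', mul_div_cancel₀ _ hpos.ne']
    _ ≤ a n * q' + a n * (q - q') := by gcongr
    _ = q * a n := by ring

/-- `A = K * diagonal D * K'` is a singular value decomposition; `D ⟨i, _⟩` is `σᵢ₊₁(A)`. -/
def IsSVD {d : ℕ} (A K : Matrix (Fin d) (Fin d) ℝ) (D : Fin d → ℝ)
    (K' : Matrix (Fin d) (Fin d) ℝ) : Prop :=
  K * Kᵀ = 1 ∧ K' * K'ᵀ = 1 ∧ (∀ i, 0 < D i) ∧ Antitone D ∧ A = K * diagonal D * K'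

section SingularValues

variable {d : ℕ}

theorem pi_norm_eq_of_antitone (hd : 0 < d) {D : Fin d → ℝ} (hpos : ∀ i, 0 < D i)
    (hanti : Antitone D) : ‖D‖ = D ⟨0, hd⟩ :=
  pi_norm_eq_of_forall_abs_le fun j => (abs_of_pos (hpos j)).trans_le (hanti (Nat.zero_le _))

theorem l2_opNorm_diagonal_mul_mul_diagonal_le (hd : 1 < d) {U : Matrix (Fin d) (Fin d) ℝ}
    (hU : U ∈ unitaryGroup (Fin d) ℝ) {a b : Fin d → ℝ} (hapos : ∀ i, 0 < a i)
    (hanti : Antitone a) (hbpos : ∀ i, 0 < b i) (hbanti : Antitone b) :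
    ‖diagonal a * U * diagonal b‖ ≤
      b ⟨0, by omega⟩ * (a ⟨1, by omega⟩ + a ⟨0, by omega⟩ *
        √(1 - U ⟨d - 1, by omega⟩ ⟨0, by omega⟩ ^ 2)) + a ⟨0, by omega⟩ * b ⟨1, by omega⟩ := by
  have hcol : U.col ⟨0, by omega⟩ ⬝ᵥ U.col ⟨0, by omega⟩ = 1 := by
    have h := congrFun (congrFun (mem_unitaryGroup_iff'.1 hU) ⟨0, by omega⟩) ⟨0, by omega⟩
    rwa [star_eq_conjTranspose, conjTranspose_eq_transpose_of_trivial, one_apply_eq] at h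
  have hentry : |a ⟨d - 1, by omega⟩ * U ⟨d - 1, by omega⟩ ⟨0, by omega⟩| ≤ a ⟨1, by omega⟩ := by
    rw [abs_mul, abs_of_pos (hapos _)]
    have hU1 : |U ⟨d - 1, by omega⟩ ⟨0, by omega⟩| ≤ 1 := entry_norm_bound_of_unitary hU _ _
    exact (mul_le_of_le_one_right (hapos _).le hU1).trans (hanti (show 1 ≤ d - 1 by omega))
  have htail : ‖Function.update b ⟨0, by omega⟩ 0‖ ≤ b ⟨1, by omega⟩ := by
    refine (pi_norm_le_iff_of_nonneg (hbpos _).le).2 fun i => ?_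
    by_cases hi : i = ⟨0, by omega⟩
    · simp [hi, (hbpos _).le]
    · rw [Function.update_of_ne hi, Real.norm_of_nonneg (hbpos i).le]
      exact hbanti (Nat.one_le_iff_ne_zero.2 fun h => hi (Fin.ext h))
  have hcolumn := norm_diagonal_mulVec_le a (U.col ⟨0, by omega⟩) ⟨d - 1, by omega⟩
  rw [hcol, pi_norm_eq_of_antitone (by omega) hapos hanti] at hcolumn
  refine (l2_opNorm_mul_diagonal_le (diagonal a * U) b ⟨0, by omega⟩).trans ?_
  rw [CStarRing.norm_mul_mem_unitary _ hU, l2_opNorm_diagonal, Real.norm_of_nonneg (hbpos _).le,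
    pi_norm_eq_of_antitone (by omega) hapos hanti]
  exact add_le_add
    (mul_le_mul_of_nonneg_left (hcolumn.trans (add_le_add_left hentry _)) (hbpos _).le)
    (mul_le_mul_of_nonneg_left htail (hapos _).le)

namespace IsSVD

variable {A K K' : Matrix (Fin d) (Fin d) ℝ} {D : Fin d → ℝ}

theorem norm_eq (h : IsSVD A K D K') (hd : 0 < d) : ‖A‖ = D ⟨0, hd⟩ := by
  obtain ⟨hK, hK', hpos, hanti, rfl⟩ := h
  rw [l2_opNorm_mul_diagonal_mul (mem_unitaryGroup_of_mul_transpose_eq_one hK)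
    (mem_unitaryGroup_of_mul_transpose_eq_one hK'), pi_norm_eq_of_antitone hd hpos hanti]

theorem norm_le_of_mem_spectrum_map (h : IsSVD A K D K') (hd : 0 < d) {z : ℂ}
    (hz : z ∈ spectrum ℂ (A.map (algebraMap ℝ ℂ))) : ‖z‖ ≤ D ⟨0, hd⟩ := by
  obtain ⟨hK, hK', hpos, hanti, rfl⟩ := h
  have : Nonempty (Fin d) := ⟨⟨0, hd⟩⟩
  rw [← pi_norm_eq_of_antitone hd hpos hanti]
  exact norm_le_pi_norm_of_mem_spectrum_map (mem_unitaryGroup_of_mul_transpose_eq_one hK)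
    (mem_unitaryGroup_of_mul_transpose_eq_one hK') D hz

theorem norm_mul_le (hd : 1 < d) {g kg kg' : Matrix (Fin d) (Fin d) ℝ} {Dg : Fin d → ℝ}
    (hg : IsSVD g kg Dg kg') (h : IsSVD A K D K') :
    ‖g * A‖ ≤ D ⟨0, by omega⟩ * (Dg ⟨1, by omega⟩ + Dg ⟨0, by omega⟩ *
        √(1 - (kg' * K) ⟨d - 1, by omega⟩ ⟨0, by omega⟩ ^ 2)) +
      Dg ⟨0, by omega⟩ * D ⟨1, by omega⟩ := by
  obtain ⟨hkg, hkg', hDgpos, hDganti, rfl⟩ := hg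
  obtain ⟨hK, hK', hpos, hanti, rfl⟩ := h
  have hU : ∀ {U : Matrix (Fin d) (Fin d) ℝ}, U * Uᵀ = 1 → U ∈ unitaryGroup (Fin d) ℝ :=
    mem_unitaryGroup_of_mul_transpose_eq_one
  have hassoc : kg * diagonal Dg * kg' * (K * diagonal D * K')
      = kg * (diagonal Dg * (kg' * K) * diagonal D) * K' := by
    simp only [Matrix.mul_assoc]
  rw [hassoc, CStarRing.norm_mul_mem_unitary _ (hU hK'), CStarRing.norm_mem_unitary_mul _ (hU hkg)]
  exact l2_opNorm_diagonal_mul_mul_diagonal_le hd (Submonoid.mul_mem _ (hU hkg') (hU hK))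
    hDgpos hDganti hpos hanti

end IsSVD

end SingularValues

/-- Let `d ≥ 2`, `g ∈ SL(d, ℝ)` with a singular value decomposition
`g = k_g D_g k_g'`, and for each `n ≥ 1` fix a singular value decomposition
`gⁿ = kₙ Dₙ kₙ'`.  If `σ₁(gⁿ)/σ₂(gⁿ) → ∞`, then
`ℓ₁(g)/σ₁(g) ≤ σ₂(g)/σ₁(g) + limsupₙ √(1 − ⟨k_g' kₙ e₁, e_d⟩²)`,
where `ℓ₁(g)` is the spectral radius of `g`. -/
theorem spectral_radius_sigma_one_bound
    (d : ℕ) (hd : 2 ≤ d)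
    (g : Matrix (Fin d) (Fin d) ℝ)
    (kg kg' : Matrix (Fin d) (Fin d) ℝ)
    (hkg : kg * kgᵀ = 1) (hkg' : kg' * kg'ᵀ = 1)
    (Dg : Fin d → ℝ)
    (hDgpos : ∀ i, 0 < Dg i) (hDganti : ∀ i j : Fin d, i ≤ j → Dg j ≤ Dg i)
    (hgdec : g = kg * Matrix.diagonal Dg * kg')
    (K K' : ℕ → Matrix (Fin d) (Fin d) ℝ) (DN : ℕ → Fin d → ℝ)
    (hKdec : ∀ n : ℕ, 1 ≤ n →
      K n * (K n)ᵀ = 1 ∧ K' n * (K' n)ᵀ = 1 ∧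
      (∀ i, 0 < DN n i) ∧ (∀ i j : Fin d, i ≤ j → DN n j ≤ DN n i) ∧
      g ^ n = K n * Matrix.diagonal (DN n) * K' n)
    (hdiv : Tendsto (fun n : ℕ => DN n ⟨0, by omega⟩ / DN n ⟨1, by omega⟩) atTop atTop) :
    lval 1 g / Dg ⟨0, by omega⟩ ≤
      Dg ⟨1, by omega⟩ / Dg ⟨0, by omega⟩ +
        limsup (fun n : ℕ =>
          Real.sqrt (1 - ((kg' * K n) ⟨d - 1, by omega⟩ ⟨0, by omega⟩) ^ 2)) atTop := by
  have : Nonempty (Fin d) := ⟨⟨0, by omega⟩⟩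
  have hg : IsSVD g kg Dg kg' := ⟨hkg, hkg', hDgpos, hDganti, hgdec⟩
  have hsvd : ∀ᶠ n in atTop, IsSVD (g ^ n) (K n) (DN n) (K' n) :=
    eventually_atTop.2 ⟨1, hKdec⟩
  obtain ⟨z, hz, hzl⟩ := exists_mem_roots_norm_eq_lval_one g
  have hpow : ∀ᶠ n in atTop, ‖z‖ ^ n ≤ DN n ⟨0, by omega⟩ := by
    filter_upwards [hsvd] with n h
    have hzn := spectrum.pow_mem_pow _ n (mem_spectrum_map_of_mem_roots hz)
    rw [← Matrix.map_pow] at hzn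
    exact (norm_pow z n).symm ▸ h.norm_le_of_mem_spectrum_map (by omega) hzn
  have hstep : ∀ᶠ n in atTop, DN (n + 1) ⟨0, by omega⟩ ≤
      DN n ⟨0, by omega⟩ * (Dg ⟨1, by omega⟩ + Dg ⟨0, by omega⟩ *
        √(1 - ((kg' * K n) ⟨d - 1, by omega⟩ ⟨0, by omega⟩) ^ 2)) +
        Dg ⟨0, by omega⟩ * DN n ⟨1, by omega⟩ := by
    filter_upwards [hsvd, (tendsto_add_atTop_nat 1).eventually hsvd] with n h h₁
    rw [← h₁.norm_eq (by omega), pow_succ']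
    exact hg.norm_mul_le hd h
  have hs : IsBoundedUnder (· ≤ ·) atTop
      fun n => √(1 - ((kg' * K n) ⟨d - 1, by omega⟩ ⟨0, by omega⟩) ^ 2) :=
    isBoundedUnder_of ⟨1, fun n => Real.sqrt_le_one.2 (by nlinarith)⟩
  have hratio : Tendsto (fun n => DN n ⟨1, by omega⟩ / DN n ⟨0, by omega⟩) atTop (𝓝 0) := by
    simpa only [Pi.inv_def, inv_div] using hdiv.inv_tendsto_atTop
  have hℓ := le_of_pow_le_of_succ_le_mul_add (hDgpos _) (hsvd.mono fun n h => h.2.2.1 _) hpow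
    hstep hs hratio
  rw [← hzl, div_add' _ _ _ (hDgpos _).ne', div_le_div_iff_of_pos_right (hDgpos _)]
  linarith
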